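/- arXiv:2404.18101 — 3 statements merged into one kernel-verified Lean document; each statement's English description precedes it below -/
import Mathlib

section
/- For every shape parameter a > 0 and bounding parameter λ > 0, the derivative of the wave loss, L_{a,λ}'(u) = u·(a·u + 2)·e^{a·u} / (1 + λ·u²·e^{a·u})², tends to 0 as u → +∞ and also tends to 0 as u → −∞; moreover L_{a,λ}' is a bounded function on ℝ. -/
noncomputable def waveLossDeriv (a lam u : ℝ) : ℝ :=
  u * (a * u + 2) * Real.exp (a * u) / (1 + lam * u ^ 2 * Real.exp (a * u)) ^ 2

open Filter Real Topology Set Bornology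

/-! With `t = u ^ 2 * exp (a * u)` one has, for `u ≠ 0`,
`waveLossDeriv a lam u = (a + 2 / u) * (t / (1 + lam * t) ^ 2)`. The first factor tends to `a`
at both ends, while `t → ∞` as `u → ∞` and `t → 0` as `u → -∞`; since `t / (1 + lam * t) ^ 2`
vanishes both at `t = 0` and as `t → ∞`, the derivative tends to `0` at both ends. A continuous
function on `ℝ` vanishing at both ends vanishes at infinity, hence is bounded. -/

theorem Continuous.isBounded_range_of_tendsto_atBot_atTop {E : Type*} [NormedAddCommGroup E]
    {f : ℝ → E} (hf : Continuous f) (hbot : Tendsto f atBot (𝓝 0))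
    (htop : Tendsto f atTop (𝓝 0)) : IsBounded (range f) :=
  let F : ZeroAtInftyContinuousMap ℝ E :=
    ⟨⟨f, hf⟩, by rw [cocompact_eq_atBot_atTop, tendsto_sup]; exact ⟨hbot, htop⟩⟩
  F.isBounded_range

theorem tendsto_pow_mul_exp_mul_atBot_nhds_zero {a : ℝ} (ha : 0 < a) (n : ℕ) :
    Tendsto (fun u => u ^ n * exp (a * u)) atBot (𝓝 0) := by
  have h := ((tendsto_rpow_mul_exp_neg_mul_atTop_nhds_zero n a ha).const_mul ((-1) ^ n)).comp
    tendsto_neg_atBot_atTop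
  rw [mul_zero] at h
  refine h.congr fun u => ?_
  simp [Real.rpow_natCast, ← mul_assoc, ← mul_pow]

theorem tendsto_sq_mul_exp_mul_atTop {a : ℝ} (ha : 0 < a) :
    Tendsto (fun u => u ^ 2 * exp (a * u)) atTop atTop :=
  (tendsto_pow_atTop two_ne_zero).atTop_mul_atTop₀
    (tendsto_exp_atTop.comp (tendsto_id.const_mul_atTop ha))

theorem tendsto_div_one_add_mul_sq_nhds_zero (lam : ℝ) :
    Tendsto (fun t => t / (1 + lam * t) ^ 2) (𝓝 0) (𝓝 0) := by
  have h : ContinuousAt (fun t => t / (1 + lam * t) ^ 2) 0 :=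
    continuousAt_id.div (by fun_prop) (by simp)
  simpa using h.tendsto

theorem tendsto_div_one_add_mul_sq_atTop {lam : ℝ} (hlam : 0 < lam) :
    Tendsto (fun t => t / (1 + lam * t) ^ 2) atTop (𝓝 0) := by
  have h := tendsto_inv_atTop_zero.div ((tendsto_inv_atTop_zero.add_const lam).pow 2)
    (by positivity : (0 + lam) ^ 2 ≠ 0)
  rw [zero_div] at h
  refine h.congr' ?_
  filter_upwards [eventually_gt_atTop 0] with t ht
  simp only [Pi.div_apply]
  field_simp

theorem waveLossDeriv_eq_mul (a lam : ℝ) {u : ℝ} (hu : u ≠ 0) :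
    waveLossDeriv a lam u =
      (a + 2 / u) * (u ^ 2 * exp (a * u) / (1 + lam * (u ^ 2 * exp (a * u))) ^ 2) := by
  unfold waveLossDeriv
  field_simp

theorem wave_loss_deriv_vanishes_and_bounded (a lam : ℝ) (ha : 0 < a) (hlam : 0 < lam) :
    Filter.Tendsto (waveLossDeriv a lam) Filter.atTop (nhds 0) ∧
    Filter.Tendsto (waveLossDeriv a lam) Filter.atBot (nhds 0) ∧
    ∃ M : ℝ, ∀ u : ℝ, |waveLossDeriv a lam u| ≤ M := by
  have htop : Tendsto (waveLossDeriv a lam) atTop (𝓝 0) := by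
    have h := (((tendsto_const_nhds (x := (2 : ℝ))).div_atTop tendsto_id).const_add a).mul
      ((tendsto_div_one_add_mul_sq_atTop hlam).comp (tendsto_sq_mul_exp_mul_atTop ha))
    rw [add_zero, mul_zero] at h
    refine h.congr' ?_
    filter_upwards [eventually_ne_atTop 0] with u hu
    exact (waveLossDeriv_eq_mul a lam hu).symm
  have hbot : Tendsto (waveLossDeriv a lam) atBot (𝓝 0) := by
    have h := (((tendsto_const_nhds (x := (2 : ℝ))).div_atBot tendsto_id).const_add a).mul
      ((tendsto_div_one_add_mul_sq_nhds_zero lam).comp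
        (tendsto_pow_mul_exp_mul_atBot_nhds_zero ha 2))
    rw [add_zero, mul_zero] at h
    refine h.congr' ?_
    filter_upwards [eventually_ne_atBot 0] with u hu
    exact (waveLossDeriv_eq_mul a lam hu).symm
  have hcont : Continuous (waveLossDeriv a lam) :=
    Continuous.div (by fun_prop) (by fun_prop) fun u => by positivity
  obtain ⟨M, hM⟩ :=
    isBounded_iff_forall_norm_le.1 (hcont.isBounded_range_of_tendsto_atBot_atTop hbot htop)
  exact ⟨htop, hbot, M, fun u => hM _ (mem_range_self u)⟩
end

section
/- Let λ > 0 and a > 0. If p ∈ (1/2, 1], then for every α > 0 one has g_p(α) < g_p(−α); symmetrically, if p ∈ [0, 1/2), then for every α > 0 one has g_p(−α) < g_p(α). That is, scores whose sign agrees with the more probable label have strictly smaller conditional wave-risk than their reflections. -/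
/-! The risk gap factors as `g_p(-α) - g_p(α) = (2p - 1) (L(1 + α) - L(1 - α))`, and
`L(1 + α) > L(1 - α)` because the wave loss increases with `u² e^{a u}`, which for `a ≥ 0`
is larger at `1 + α` than at `1 - α` in both factors. -/

noncomputable def waveLoss (a lam u : ℝ) : ℝ :=
  (1 / lam) * (1 - 1 / (1 + lam * u ^ 2 * Real.exp (a * u)))

noncomputable def condWaveRisk (a lam p α : ℝ) : ℝ :=
  p * waveLoss a lam (1 - α) + (1 - p) * waveLoss a lam (1 + α)

lemma waveLoss_lt_waveLoss {a lam u v : ℝ} (hlam : 0 < lam)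
    (h : u ^ 2 * Real.exp (a * u) < v ^ 2 * Real.exp (a * v)) :
    waveLoss a lam u < waveLoss a lam v := by
  have huv : 1 + lam * u ^ 2 * Real.exp (a * u) < 1 + lam * v ^ 2 * Real.exp (a * v) := by
    rw [mul_assoc, mul_assoc]
    gcongr
  unfold waveLoss
  gcongr

lemma sq_mul_exp_one_sub_lt {a α : ℝ} (ha : 0 ≤ a) (hα : 0 < α) :
    (1 - α) ^ 2 * Real.exp (a * (1 - α)) < (1 + α) ^ 2 * Real.exp (a * (1 + α)) := by
  have hsq : (1 - α) ^ 2 < (1 + α) ^ 2 := by nlinarith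
  have hexp : Real.exp (a * (1 - α)) ≤ Real.exp (a * (1 + α)) := by
    gcongr
    linarith
  calc (1 - α) ^ 2 * Real.exp (a * (1 - α)) < (1 + α) ^ 2 * Real.exp (a * (1 - α)) := by
        gcongr
    _ ≤ (1 + α) ^ 2 * Real.exp (a * (1 + α)) := by gcongr

lemma waveLoss_one_sub_lt_one_add {a lam α : ℝ} (hlam : 0 < lam) (ha : 0 ≤ a) (hα : 0 < α) :
    waveLoss a lam (1 - α) < waveLoss a lam (1 + α) :=
  waveLoss_lt_waveLoss hlam (sq_mul_exp_one_sub_lt ha hα)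

lemma condWaveRisk_neg_sub (a lam p α : ℝ) :
    condWaveRisk a lam p (-α) - condWaveRisk a lam p α =
      (2 * p - 1) * (waveLoss a lam (1 + α) - waveLoss a lam (1 - α)) := by
  simp only [condWaveRisk, sub_neg_eq_add, ← sub_eq_add_neg]
  ring

theorem sign_agreement_smaller_risk_general (a lam p : ℝ) (hlam : 0 < lam) (ha : 0 < a) :
    (1 / 2 < p → ∀ α : ℝ, 0 < α → condWaveRisk a lam p α < condWaveRisk a lam p (-α)) ∧
    (p < 1 / 2 → ∀ α : ℝ, 0 < α → condWaveRisk a lam p (-α) < condWaveRisk a lam p α) := by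
  have hgap : ∀ α : ℝ, 0 < α → 0 < waveLoss a lam (1 + α) - waveLoss a lam (1 - α) :=
    fun α hα => sub_pos.2 (waveLoss_one_sub_lt_one_add hlam ha.le hα)
  constructor
  · intro hp α hα
    have := mul_pos (by linarith : 0 < 2 * p - 1) (hgap α hα)
    linarith [condWaveRisk_neg_sub a lam p α]
  · intro hp α hα
    have := mul_neg_of_neg_of_pos (by linarith : 2 * p - 1 < 0) (hgap α hα)
    linarith [condWaveRisk_neg_sub a lam p α]

theorem sign_agreement_smaller_risk (a lam p : ℝ) (hlam : 0 < lam) (ha : 0 < a)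
    (hp : p ∈ Set.Icc (0 : ℝ) 1) :
    (1 / 2 < p → ∀ α : ℝ, 0 < α → condWaveRisk a lam p α < condWaveRisk a lam p (-α)) ∧
    (p < 1 / 2 → ∀ α : ℝ, 0 < α → condWaveRisk a lam p (-α) < condWaveRisk a lam p α) :=
  sign_agreement_smaller_risk_general a lam p hlam ha
end

section
/- (Classification-calibration of the wave loss, infimum form.) Let λ > 0 and a > 0, and let p ∈ [0, 1] with p ≠ 1/2. Then the infimum of the conditional wave-risk g_p(α) over the set of scores whose sign disagrees with the Bayes decision, namely over {α ∈ ℝ : (2p − 1)·α ≤ 0}, is strictly greater than the infimum of g_p(α) over all α ∈ ℝ. -/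
/-!
Take p > 1/2; the case p < 1/2 is its mirror image under α ↦ -α. For α < 0 the reflection
identity g(α) - g(-α) = (2p - 1)(L(1 - α) - L(1 + α)) is positive, because u² e^{au} is larger
at 1 - α than at 1 + α, so every wrong-signed score α < 0 is beaten by -α. The score 0 is not a
global minimiser either, since g'(0) = (1 - 2p) L'(1) ≠ 0. Strictness of the infimum then comes
from compactness: g is continuous and tends to p/λ at -∞, which exceeds its limit (1 - p)/λ at
+∞ and hence the global infimum.
-/

open Filter Topology Set Real

theorem lt_csInf_image_Iic_of_tendsto {f : ℝ → ℝ} {b c l : ℝ} (hf : ContinuousOn f (Iic b))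
    (hlt : ∀ x ≤ b, c < f x) (hl : Tendsto f atBot (𝓝 l)) (hcl : c < l) :
    c < sInf (f '' Iic b) := by
  obtain ⟨d, hcd, hdl⟩ := exists_between hcl
  obtain ⟨T, hT⟩ := eventually_atBot.1 (hl.eventually_const_lt hdl)
  obtain ⟨m, hm, hmin⟩ := isCompact_Icc.exists_isMinOn (nonempty_Icc.2 (min_le_right T b))
    (hf.mono Icc_subset_Iic_self)
  refine (lt_min hcd (hlt m hm.2)).trans_le (le_csInf (nonempty_Iic.image f) ?_)
  rintro _ ⟨x, hx, rfl⟩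
  rcases le_total x (min T b) with h | h
  · exact (min_le_left _ _).trans (hT x (h.trans (min_le_left _ _))).le
  · exact (min_le_right _ _).trans (hmin ⟨h, hx⟩)

noncomputable def wavePhi (a u : ℝ) : ℝ := u ^ 2 * exp (a * u)

section WavePhi

variable {a : ℝ}

theorem wavePhi_nonneg (a u : ℝ) : 0 ≤ wavePhi a u := by
  unfold wavePhi; positivity

theorem wavePhi_one_add_lt_one_sub (ha : 0 < a) {α : ℝ} (hα : α < 0) :
    wavePhi a (1 + α) < wavePhi a (1 - α) := by
  unfold wavePhi
  calc (1 + α) ^ 2 * exp (a * (1 + α)) < (1 - α) ^ 2 * exp (a * (1 + α)) :=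
        mul_lt_mul_of_pos_right (by nlinarith) (exp_pos _)
    _ ≤ (1 - α) ^ 2 * exp (a * (1 - α)) := by gcongr; linarith

theorem hasDerivAt_wavePhi (a u : ℝ) :
    HasDerivAt (wavePhi a) ((2 * u + a * u ^ 2) * exp (a * u)) u := by
  have h := (hasDerivAt_pow 2 u).mul ((hasDerivAt_id' u).const_mul a).exp
  exact h.congr_deriv (by ring)

theorem tendsto_wavePhi_atTop (ha : 0 < a) : Tendsto (wavePhi a) atTop atTop :=
  (tendsto_pow_atTop two_ne_zero).atTop_mul_atTop₀
    (tendsto_exp_atTop.comp (tendsto_id.const_mul_atTop ha))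

theorem tendsto_wavePhi_atBot (ha : 0 < a) : Tendsto (wavePhi a) atBot (𝓝 0) := by
  have h := ((tendsto_pow_mul_exp_neg_atTop_nhds_zero 2).comp
    ((tendsto_neg_atBot_atTop.comp (tendsto_id.const_mul_atBot ha)))).const_mul (a ^ 2)⁻¹
  rw [mul_zero] at h
  refine h.congr fun u => ?_
  simp [wavePhi]
  field_simp

end WavePhi

section WaveLoss

variable {a lam u : ℝ}

theorem waveLoss_eq (a lam u : ℝ) :
    waveLoss a lam u = 1 / lam * (1 - (1 + lam * wavePhi a u)⁻¹) := by
  rw [waveLoss, wavePhi, mul_assoc, one_div (1 + _)]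

theorem waveLoss_nonneg (hlam : 0 ≤ lam) : 0 ≤ waveLoss a lam u := by
  rw [waveLoss_eq]
  have := wavePhi_nonneg a u
  have : (1 + lam * wavePhi a u)⁻¹ ≤ 1 := inv_le_one_of_one_le₀ (by nlinarith)
  have : 0 ≤ 1 / lam := by positivity
  nlinarith

theorem waveLoss_lt_waveLoss_of_wavePhi_lt (hlam : 0 < lam) {v : ℝ}
    (h : wavePhi a u < wavePhi a v) :
    waveLoss a lam u < waveLoss a lam v := by
  rw [waveLoss_eq, waveLoss_eq]
  have := wavePhi_nonneg a u
  gcongr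

theorem hasDerivAt_waveLoss (hlam : 0 < lam) (u : ℝ) :
    HasDerivAt (waveLoss a lam)
      ((2 * u + a * u ^ 2) * exp (a * u) / (1 + lam * wavePhi a u) ^ 2) u := by
  have hpos : 0 < 1 + lam * wavePhi a u := by have := wavePhi_nonneg a u; positivity
  have h := (((hasDerivAt_wavePhi a u).const_mul lam).const_add 1).inv hpos.ne'
  have h' := (h.const_sub 1).const_mul (1 / lam)
  rw [funext (waveLoss_eq a lam)]
  exact h'.congr_deriv (by field_simp)

theorem continuous_waveLoss (hlam : 0 < lam) : Continuous (waveLoss a lam) :=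
  continuous_iff_continuousAt.2 fun u => (hasDerivAt_waveLoss hlam u).continuousAt

theorem tendsto_waveLoss_atTop (hlam : 0 < lam) (ha : 0 < a) :
    Tendsto (waveLoss a lam) atTop (𝓝 (1 / lam)) := by
  have h := (tendsto_atTop_add_const_left _ 1
    ((tendsto_wavePhi_atTop ha).const_mul_atTop hlam)).inv_tendsto_atTop
  have h' := (h.const_sub 1).const_mul (1 / lam)
  rw [funext (waveLoss_eq a lam)]
  simpa using h'

theorem tendsto_waveLoss_atBot (ha : 0 < a) :
    Tendsto (waveLoss a lam) atBot (𝓝 0) := by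
  have h := ((((tendsto_wavePhi_atBot ha).const_mul lam).const_add 1).inv₀ (by simp)).const_sub 1
  rw [funext (waveLoss_eq a lam)]
  simpa using h.const_mul (1 / lam)

end WaveLoss

section CondWaveRisk

variable {a lam p : ℝ}

theorem condWaveRisk_eq_comp_neg (a lam p : ℝ) :
    condWaveRisk a lam p = condWaveRisk a lam (1 - p) ∘ Neg.neg := by
  ext α
  simp only [condWaveRisk, Function.comp_apply, sub_neg_eq_add, ← sub_eq_add_neg]
  ring

theorem condWaveRisk_sub_condWaveRisk_neg (a lam p α : ℝ) :
    condWaveRisk a lam p α - condWaveRisk a lam p (-α) =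
      (2 * p - 1) * (waveLoss a lam (1 - α) - waveLoss a lam (1 + α)) := by
  simp only [condWaveRisk, sub_neg_eq_add, ← sub_eq_add_neg]
  ring

theorem condWaveRisk_neg_lt (hlam : 0 < lam) (ha : 0 < a) (hp : 1 / 2 < p) {α : ℝ}
    (hα : α < 0) :
    condWaveRisk a lam p (-α) < condWaveRisk a lam p α := by
  have hL := waveLoss_lt_waveLoss_of_wavePhi_lt hlam (wavePhi_one_add_lt_one_sub ha hα)
  have := condWaveRisk_sub_condWaveRisk_neg a lam p α
  nlinarith

theorem condWaveRisk_nonneg (hlam : 0 ≤ lam) (hp : p ∈ Icc (0 : ℝ) 1) (α : ℝ) :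
    0 ≤ condWaveRisk a lam p α :=
  add_nonneg (mul_nonneg hp.1 (waveLoss_nonneg hlam))
    (mul_nonneg (sub_nonneg.2 hp.2) (waveLoss_nonneg hlam))

theorem continuous_condWaveRisk (hlam : 0 < lam) : Continuous (condWaveRisk a lam p) := by
  have := continuous_waveLoss (a := a) hlam
  unfold condWaveRisk
  fun_prop

theorem tendsto_condWaveRisk_atBot (hlam : 0 < lam) (ha : 0 < a) :
    Tendsto (condWaveRisk a lam p) atBot (𝓝 (p / lam)) := by
  have h1 := (tendsto_waveLoss_atTop hlam ha).comp
    (tendsto_atTop_add_const_left _ 1 tendsto_neg_atBot_atTop)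
  have h2 := (tendsto_waveLoss_atBot (lam := lam) ha).comp
    (tendsto_atBot_add_const_left _ 1 tendsto_id)
  have h := (h1.const_mul p).add (h2.const_mul (1 - p))
  rw [mul_zero, add_zero, ← div_eq_mul_one_div] at h
  exact h.congr fun α => by simp [condWaveRisk, sub_eq_add_neg]

theorem tendsto_condWaveRisk_atTop (hlam : 0 < lam) (ha : 0 < a) :
    Tendsto (condWaveRisk a lam p) atTop (𝓝 ((1 - p) / lam)) := by
  rw [condWaveRisk_eq_comp_neg]
  simpa using (tendsto_condWaveRisk_atBot hlam ha).comp tendsto_neg_atTop_atBot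

theorem hasDerivAt_condWaveRisk_zero {D : ℝ} (hD : HasDerivAt (waveLoss a lam) D 1) :
    HasDerivAt (condWaveRisk a lam p) ((1 - 2 * p) * D) 0 := by
  have h1 := HasDerivAt.comp_const_sub (1 : ℝ) 0 (by simpa using hD)
  have h2 := HasDerivAt.comp_const_add (1 : ℝ) 0 (by simpa using hD)
  exact ((h1.const_mul p).add (h2.const_mul (1 - p))).congr_deriv (by ring)

theorem bddBelow_range_condWaveRisk (hlam : 0 ≤ lam) (hp : p ∈ Icc (0 : ℝ) 1) :
    BddBelow (range (condWaveRisk a lam p)) :=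
  ⟨0, forall_mem_range.2 (condWaveRisk_nonneg hlam hp)⟩

theorem csInf_range_condWaveRisk_lt_apply_zero (hlam : 0 < lam) (ha : 0 < a)
    (hp : p ∈ Icc (0 : ℝ) 1) (hp' : p ≠ 1 / 2) :
    sInf (range (condWaveRisk a lam p)) < condWaveRisk a lam p 0 := by
  have hD : 0 < (2 * 1 + a * 1 ^ 2) * exp (a * 1) / (1 + lam * wavePhi a 1) ^ 2 := by
    have := wavePhi_nonneg a 1
    positivity
  refine lt_of_not_ge fun h0 => ?_
  have hmin : IsLocalMin (condWaveRisk a lam p) 0 := Eventually.of_forall fun α =>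
    h0.trans (csInf_le (bddBelow_range_condWaveRisk hlam.le hp) (mem_range_self α))
  rcases mul_eq_zero.1 (hmin.hasDerivAt_eq_zero
    (hasDerivAt_condWaveRisk_zero (hasDerivAt_waveLoss hlam 1))) with h | h
  · exact hp' (by linarith)
  · exact hD.ne' h

theorem csInf_range_condWaveRisk_lt_csInf_image_Iic (hlam : 0 < lam) (ha : 0 < a)
    (hp : p ∈ Icc (0 : ℝ) 1) (hp' : 1 / 2 < p) :
    sInf (range (condWaveRisk a lam p)) < sInf (condWaveRisk a lam p '' Iic 0) := by
  have hle : ∀ α, sInf (range (condWaveRisk a lam p)) ≤ condWaveRisk a lam p α :=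
    fun α => csInf_le (bddBelow_range_condWaveRisk hlam.le hp) (mem_range_self α)
  refine lt_csInf_image_Iic_of_tendsto (continuous_condWaveRisk hlam).continuousOn
    (fun α hα => ?_) (tendsto_condWaveRisk_atBot hlam ha) ?_
  · rcases hα.lt_or_eq with hα | rfl
    · exact (hle (-α)).trans_lt (condWaveRisk_neg_lt hlam ha hp' hα)
    · exact csInf_range_condWaveRisk_lt_apply_zero hlam ha hp hp'.ne'
  · calc sInf (range (condWaveRisk a lam p)) ≤ (1 - p) / lam :=
          ge_of_tendsto' (tendsto_condWaveRisk_atTop hlam ha) hle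
      _ < p / lam := by gcongr; linarith

end CondWaveRisk

theorem wave_loss_classification_calibrated_inf (a lam p : ℝ) (hlam : 0 < lam)
    (ha : 0 < a) (hp : p ∈ Set.Icc (0 : ℝ) 1) (hp' : p ≠ 1 / 2) :
    sInf (Set.range (condWaveRisk a lam p)) <
      sInf (condWaveRisk a lam p '' {α : ℝ | (2 * p - 1) * α ≤ 0}) := by
  rcases hp'.lt_or_gt with hlt | hgt
  · have hset : {α : ℝ | (2 * p - 1) * α ≤ 0} = Ici 0 := by
      ext α
      simpa using mul_le_mul_left_of_neg (a := α) (b := 0) (by linarith : 2 * p - 1 < 0)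
    rw [hset, condWaveRisk_eq_comp_neg, neg_surjective.range_comp, image_comp, image_neg_Ici,
      neg_zero]
    exact csInf_range_condWaveRisk_lt_csInf_image_Iic hlam ha
      ⟨by linarith [hp.2], by linarith [hp.1]⟩ (by linarith)
  · have hset : {α : ℝ | (2 * p - 1) * α ≤ 0} = Iic 0 := by
      ext α
      simpa using mul_le_mul_iff_of_pos_left (b := α) (c := 0) (by linarith : 0 < 2 * p - 1)
    rw [hset]
    exact csInf_range_condWaveRisk_lt_csInf_image_Iic hlam ha hp hgt
end
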